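/- arXiv:2305.09248 — 6 statements merged into one kernel-verified Lean document; each statement's English description precedes it below -/
import Mathlib

section
/- Let A be a rainbow-bisecting empty square annulus (RBSA) for P whose width is greater than or equal to the width of every RBSA for P (a maximum-width RBSA). Then the boundary of the inner square of A contains at least one point of P, and the boundary of the outer square of A contains at least one point of P. -/
/-- Chebyshev (L∞) distance in the plane: the boundary of the axis-parallel
square with center `c` and radius `r` (half side length) is `{p | chebDist p c = r}`. -/
def chebDist (p c : ℝ × ℝ) : ℝ := max |p.1 - c.1| |p.2 - c.2|

/-- A set of points is rainbow if it contains at least one point of each of the `k` colors. -/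
def IsRainbow (k : ℕ) (α : ℝ × ℝ → Fin k) (S : Set (ℝ × ℝ)) : Prop :=
  ∀ i : Fin k, ∃ p ∈ S, α p = i

/-- A rainbow-bisecting empty square annulus for `P`, given by its center `c`,
inner radius `rin` and outer radius `rout` (the width is `rout - rin`): its interior
contains no point of `P`, the points of `P` inside or on the inner square form a
rainbow set, and the points of `P` outside or on the outer square form a rainbow set. -/
def IsRBSA (k : ℕ) (P : Finset (ℝ × ℝ)) (α : ℝ × ℝ → Fin k)
    (c : ℝ × ℝ) (rin rout : ℝ) : Prop :=
  0 ≤ rin ∧ rin ≤ rout ∧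
  (∀ p ∈ P, ¬ (rin < chebDist p c ∧ chebDist p c < rout)) ∧
  IsRainbow k α {p | p ∈ P ∧ chebDist p c ≤ rin} ∧
  IsRainbow k α {p | p ∈ P ∧ rout ≤ chebDist p c}

/-- A maximum-width RBSA has a point of `P` on the boundary of its inner square
and a point of `P` on the boundary of its outer square. -/
theorem maxWidth_RBSA_boundary_points (k : ℕ) (P : Finset (ℝ × ℝ)) (α : ℝ × ℝ → Fin k)
    (htwo : ∀ i : Fin k, ∃ p ∈ P, ∃ q ∈ P, p ≠ q ∧ α p = i ∧ α q = i)
    (c : ℝ × ℝ) (rin rout : ℝ)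
    (hA : IsRBSA k P α c rin rout)
    (hmax : ∀ c' rin' rout', IsRBSA k P α c' rin' rout' → rout' - rin' ≤ rout - rin) :
    (∃ p ∈ P, chebDist p c = rin) ∧ (∃ p ∈ P, chebDist p c = rout) := by
  obtain ⟨hrin0, hrr, hempty, hinner, houter⟩ := hA
  have hd0 : ∀ p : ℝ × ℝ, 0 ≤ chebDist p c := fun p =>
    le_trans (abs_nonneg _) (le_max_left _ _)
  rcases Nat.eq_zero_or_pos k with hk | hk
  · exfalso
    subst hk
    obtain ⟨B, hB⟩ := (P.image fun p => |p.1|).exists_le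
    have hW : (0:ℝ) ≤ rout - rin := by linarith
    have hR : IsRBSA 0 P α (B + (rout - rin) + 1, 0) 0 (rout - rin + 1) := by
      refine ⟨le_refl 0, by linarith, ?_, fun i => i.elim0, fun i => i.elim0⟩
      rintro p hp ⟨h1, h2⟩
      have hpB : |p.1| ≤ B := hB _ (Finset.mem_image_of_mem _ hp)
      have h3 : (B + (rout - rin) + 1) - p.1 ≤ |p.1 - (B + (rout - rin) + 1)| := by
        rw [abs_sub_comm]; exact le_trans (by linarith [le_abs_self p.1]) (le_abs_self _)
      have h4 : |p.1 - (B + (rout - rin) + 1)| ≤ chebDist p (B + (rout - rin) + 1, 0) :=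
        le_max_left _ _
      have h5 : p.1 ≤ |p.1| := le_abs_self _
      simp only [chebDist] at h2 h4
      linarith
    linarith [hmax _ _ _ hR]
  constructor
  · by_contra h
    push_neg at h
    set I := P.filter (fun p => chebDist p c ≤ rin) with hI
    have hIne : I.Nonempty := by
      obtain ⟨p, ⟨hpP, hpd⟩, -⟩ := hinner ⟨0, hk⟩
      exact ⟨p, Finset.mem_filter.2 ⟨hpP, hpd⟩⟩
    set r' := I.sup' hIne (fun p => chebDist p c) with hr'
    have hr'lt : r' < rin := by
      apply Finset.sup'_lt_iff hIne |>.2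
      intro p hp
      obtain ⟨hpP, hpd⟩ := Finset.mem_filter.1 hp
      exact lt_of_le_of_ne hpd (h p hpP)
    have hr'0 : 0 ≤ r' := by
      obtain ⟨p, hp⟩ := hIne
      exact le_trans (hd0 p) (Finset.le_sup' (f := fun p => chebDist p c) hp)
    have hR : IsRBSA k P α c r' rout := by
      refine ⟨hr'0, by linarith, ?_, ?_, houter⟩
      · rintro p hp ⟨h1, h2⟩
        have hdle : chebDist p c ≤ rin := by
          by_contra hc
          exact hempty p hp ⟨lt_of_not_ge hc, h2⟩
        have : chebDist p c ≤ r' := Finset.le_sup' (f := fun p => chebDist p c) (Finset.mem_filter.2 ⟨hp, hdle⟩)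
        linarith
      · intro i
        obtain ⟨p, ⟨hpP, hpd⟩, hpc⟩ := hinner i
        exact ⟨p, ⟨hpP, Finset.le_sup' (f := fun p => chebDist p c) (Finset.mem_filter.2 ⟨hpP, hpd⟩)⟩, hpc⟩
    linarith [hmax _ _ _ hR]
  · by_contra h
    push_neg at h
    set O := P.filter (fun p => rout ≤ chebDist p c) with hO
    have hOne : O.Nonempty := by
      obtain ⟨p, ⟨hpP, hpd⟩, -⟩ := houter ⟨0, hk⟩
      exact ⟨p, Finset.mem_filter.2 ⟨hpP, hpd⟩⟩
    set r' := O.inf' hOne (fun p => chebDist p c) with hr'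
    have hr'gt : rout < r' := by
      apply Finset.lt_inf'_iff hOne |>.2
      intro p hp
      obtain ⟨hpP, hpd⟩ := Finset.mem_filter.1 hp
      exact lt_of_le_of_ne hpd (fun e => h p hpP e.symm)
    have hR : IsRBSA k P α c rin r' := by
      refine ⟨hrin0, by linarith, ?_, hinner, ?_⟩
      · rintro p hp ⟨h1, h2⟩
        have hdge : rout ≤ chebDist p c := by
          by_contra hc
          exact hempty p hp ⟨h1, lt_of_not_ge hc⟩
        have : r' ≤ chebDist p c := Finset.inf'_le (f := fun p => chebDist p c) (Finset.mem_filter.2 ⟨hp, hdge⟩)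
        linarith
      · intro i
        obtain ⟨p, ⟨hpP, hpd⟩, hpc⟩ := houter i
        exact ⟨p, ⟨hpP, Finset.inf'_le (f := fun p => chebDist p c) (Finset.mem_filter.2 ⟨hpP, hpd⟩)⟩, hpc⟩
    linarith [hmax _ _ _ hR]
end

section
/- For every rainbow-bisecting empty rectangular annulus (RBRA) A for P there exists an RBRA A' for P whose width is at least the width of A and such that each of the four sides of the inner rectangle of A' contains at least one point of P. -/
/-- An axis-parallel rectangle `[x1,x2] × [y1,y2]`. -/
structure Rect where
  x1 : ℝ
  x2 : ℝ
  y1 : ℝ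
  y2 : ℝ
  hx : x1 ≤ x2
  hy : y1 ≤ y2

/-- Membership in the closed rectangle. -/
def Rect.Mem (R : Rect) (p : ℝ × ℝ) : Prop :=
  R.x1 ≤ p.1 ∧ p.1 ≤ R.x2 ∧ R.y1 ≤ p.2 ∧ p.2 ≤ R.y2

/-- Membership in the interior of the rectangle. -/
def Rect.MemInt (R : Rect) (p : ℝ × ℝ) : Prop :=
  R.x1 < p.1 ∧ p.1 < R.x2 ∧ R.y1 < p.2 ∧ p.2 < R.y2

/-- `Rect.Sub Rin Rout` means `Rin ⊆ Rout`. -/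
def Rect.Sub (Rin Rout : Rect) : Prop :=
  Rout.x1 ≤ Rin.x1 ∧ Rin.x2 ≤ Rout.x2 ∧ Rout.y1 ≤ Rin.y1 ∧ Rin.y2 ≤ Rout.y2

/-- Top-width of the rectangular annulus with outer rectangle `Rout` and inner rectangle `Rin`. -/
def annTopWidth (Rout Rin : Rect) : ℝ := Rout.y2 - Rin.y2

/-- Bottom-width of the rectangular annulus. -/
def annBotWidth (Rout Rin : Rect) : ℝ := Rin.y1 - Rout.y1

/-- Left-width of the rectangular annulus. -/
def annLeftWidth (Rout Rin : Rect) : ℝ := Rin.x1 - Rout.x1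

/-- Right-width of the rectangular annulus. -/
def annRightWidth (Rout Rin : Rect) : ℝ := Rout.x2 - Rin.x2

/-- Width of the rectangular annulus: the minimum of the four side-widths. -/
def annWidth (Rout Rin : Rect) : ℝ :=
  min (min (annTopWidth Rout Rin) (annBotWidth Rout Rin))
      (min (annLeftWidth Rout Rin) (annRightWidth Rout Rin))

/-- A rainbow-bisecting empty rectangular annulus (RBRA) for `P` with outer rectangle
`Rout` and inner rectangle `Rin ⊆ Rout`: its interior contains no point of `P`, the
points of `P` inside or on the boundary of `Rin` form a rainbow set, and the points of
`P` outside or on the boundary of `Rout` form a rainbow set. -/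
def IsRBRA (k : ℕ) (P : Finset (ℝ × ℝ)) (α : ℝ × ℝ → Fin k) (Rout Rin : Rect) : Prop :=
  Rect.Sub Rin Rout ∧
  (∀ p ∈ P, Rect.MemInt Rout p → Rect.Mem Rin p) ∧
  IsRainbow k α {p | p ∈ P ∧ Rect.Mem Rin p} ∧
  IsRainbow k α {p | p ∈ P ∧ ¬ Rect.MemInt Rout p}

/-- `p` lies on the top side of the rectangle `R`. -/
def onTopSide (R : Rect) (p : ℝ × ℝ) : Prop := p.2 = R.y2 ∧ R.x1 ≤ p.1 ∧ p.1 ≤ R.x2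

/-- `p` lies on the bottom side of the rectangle `R`. -/
def onBotSide (R : Rect) (p : ℝ × ℝ) : Prop := p.2 = R.y1 ∧ R.x1 ≤ p.1 ∧ p.1 ≤ R.x2

/-- `p` lies on the left side of the rectangle `R`. -/
def onLeftSide (R : Rect) (p : ℝ × ℝ) : Prop := p.1 = R.x1 ∧ R.y1 ≤ p.2 ∧ p.2 ≤ R.y2

/-- `p` lies on the right side of the rectangle `R`. -/
def onRightSide (R : Rect) (p : ℝ × ℝ) : Prop := p.1 = R.x2 ∧ R.y1 ≤ p.2 ∧ p.2 ≤ R.y2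

/-- For every RBRA `A` for `P` there is an RBRA `A'` for `P` of width at least the
width of `A` such that each of the four sides of the inner rectangle of `A'`
contains a point of `P`. -/
theorem RBRA_inner_sides_points (k : ℕ) (P : Finset (ℝ × ℝ)) (α : ℝ × ℝ → Fin k)
    (htwo : ∀ i : Fin k, ∃ p ∈ P, ∃ q ∈ P, p ≠ q ∧ α p = i ∧ α q = i)
    (Rout Rin : Rect) (hA : IsRBRA k P α Rout Rin) :
    ∃ Rout' Rin', IsRBRA k P α Rout' Rin' ∧
      annWidth Rout Rin ≤ annWidth Rout' Rin' ∧
      (∃ p ∈ P, onTopSide Rin' p) ∧ (∃ p ∈ P, onBotSide Rin' p) ∧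
      (∃ p ∈ P, onLeftSide Rin' p) ∧ (∃ p ∈ P, onRightSide Rin' p) := by
  classical
  -- k = 0 is impossible since α (0,0) : Fin 0
  rcases Nat.eq_zero_or_pos k with hk | hk
  · subst hk; exact (α (0, 0)).elim0
  obtain ⟨hSub, hEmpty, hInner, hOuter⟩ := hA
  set S : Finset (ℝ × ℝ) := P.filter (fun p => Rect.Mem Rin p) with hS_def
  have hS : S.Nonempty := by
    obtain ⟨p, hp, -⟩ := hInner ⟨0, hk⟩
    exact ⟨p, by simpa [hS_def] using hp⟩
  have hSmem : ∀ p ∈ S, p ∈ P ∧ Rect.Mem Rin p := by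
    intro p hp
    simpa [hS_def] using hp
  set x1' := S.inf' hS (fun p => p.1) with hx1'
  set x2' := S.sup' hS (fun p => p.1) with hx2'
  set y1' := S.inf' hS (fun p => p.2) with hy1'
  set y2' := S.sup' hS (fun p => p.2) with hy2'
  obtain ⟨q, hq⟩ := id hS
  have hxle : x1' ≤ x2' :=
    le_trans (Finset.inf'_le _ hq) (Finset.le_sup' _ hq)
  have hyle : y1' ≤ y2' :=
    le_trans (Finset.inf'_le _ hq) (Finset.le_sup' _ hq)
  set Rin' : Rect := ⟨x1', x2', y1', y2', hxle, hyle⟩ with hRin'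
  -- every point of S is in Rin'
  have hmem' : ∀ p ∈ S, Rect.Mem Rin' p := by
    intro p hp
    exact ⟨Finset.inf'_le _ hp, Finset.le_sup' _ hp,
           Finset.inf'_le _ hp, Finset.le_sup' _ hp⟩
  -- Rin' ⊆ Rin
  have hsub : Rect.Sub Rin' Rin := by
    refine ⟨?_, ?_, ?_, ?_⟩
    · exact Finset.le_inf' hS _ (fun p hp => (hSmem p hp).2.1)
    · exact Finset.sup'_le hS _ (fun p hp => (hSmem p hp).2.2.1)
    · exact Finset.le_inf' hS _ (fun p hp => (hSmem p hp).2.2.2.1)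
    · exact Finset.sup'_le hS _ (fun p hp => (hSmem p hp).2.2.2.2)
  refine ⟨Rout, Rin', ⟨?_, ?_, ?_, hOuter⟩, ?_, ?_, ?_, ?_, ?_⟩
  · exact ⟨le_trans hSub.1 hsub.1, le_trans hsub.2.1 hSub.2.1,
      le_trans hSub.2.2.1 hsub.2.2.1, le_trans hsub.2.2.2 hSub.2.2.2⟩
  · intro p hp hpint
    exact hmem' p (by simp [hS_def, hp, hEmpty p hp hpint])
  · intro i
    obtain ⟨p, hp, hpi⟩ := hInner i
    exact ⟨p, ⟨hp.1, hmem' p (by simp [hS_def, hp.1, hp.2])⟩, hpi⟩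
  · unfold annWidth annTopWidth annBotWidth annLeftWidth annRightWidth
    have h1 := hsub.1
    have h2 := hsub.2.1
    have h3 := hsub.2.2.1
    have h4 := hsub.2.2.2
    apply min_le_min <;> apply min_le_min <;> simp only [hRin'] <;> linarith
  · obtain ⟨p, hp, hpe⟩ := Finset.exists_mem_eq_sup' hS (fun p => p.2)
    exact ⟨p, (hSmem p hp).1, hpe.symm, Finset.inf'_le _ hp, Finset.le_sup' _ hp⟩
  · obtain ⟨p, hp, hpe⟩ := Finset.exists_mem_eq_inf' hS (fun p => p.2)
    exact ⟨p, (hSmem p hp).1, hpe.symm, Finset.inf'_le _ hp, Finset.le_sup' _ hp⟩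
  · obtain ⟨p, hp, hpe⟩ := Finset.exists_mem_eq_inf' hS (fun p => p.1)
    exact ⟨p, (hSmem p hp).1, hpe.symm, Finset.inf'_le _ hp, Finset.le_sup' _ hp⟩
  · obtain ⟨p, hp, hpe⟩ := Finset.exists_mem_eq_sup' hS (fun p => p.1)
    exact ⟨p, (hSmem p hp).1, hpe.symm, Finset.inf'_le _ hp, Finset.le_sup' _ hp⟩
end

section
/- For every rainbow-bisecting empty rectangular annulus (RBRA) A for P of width w, there exists an RBRA A'' for P of uniform width w'' for some w'' ≥ w (i.e., its top-, bottom-, left-, and right-widths are all equal to w'') such that at least one side of the inner rectangle of A'' contains a point of P. -/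
/-- For every RBRA `A` for `P` of width `w` there is a uniform-width RBRA `A''` for `P`
whose four side-widths are all equal to some `w'' ≥ w`, such that at least one side of
the inner rectangle of `A''` contains a point of `P`. -/
theorem RBRA_uniform_width (k : ℕ) (P : Finset (ℝ × ℝ)) (α : ℝ × ℝ → Fin k)
    (htwo : ∀ i : Fin k, ∃ p ∈ P, ∃ q ∈ P, p ≠ q ∧ α p = i ∧ α q = i)
    (Rout Rin : Rect) (hA : IsRBRA k P α Rout Rin) :
    ∃ Rout'' Rin'' w'', IsRBRA k P α Rout'' Rin'' ∧
      annWidth Rout Rin ≤ w'' ∧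
      annTopWidth Rout'' Rin'' = w'' ∧ annBotWidth Rout'' Rin'' = w'' ∧
      annLeftWidth Rout'' Rin'' = w'' ∧ annRightWidth Rout'' Rin'' = w'' ∧
      ((∃ p ∈ P, onTopSide Rin'' p) ∨ (∃ p ∈ P, onBotSide Rin'' p) ∨
       (∃ p ∈ P, onLeftSide Rin'' p) ∨ (∃ p ∈ P, onRightSide Rin'' p)) := by

  classical
  obtain ⟨⟨hs1, hs2, hs3, hs4⟩, hemp, hin, hout⟩ := hA
  set w := annWidth Rout Rin with hw
  have hT : w ≤ Rout.y2 - Rin.y2 := (min_le_left _ _).trans (min_le_left _ _)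
  have hB : w ≤ Rin.y1 - Rout.y1 := (min_le_left _ _).trans (min_le_right _ _)
  have hL : w ≤ Rin.x1 - Rout.x1 := (min_le_right _ _).trans (min_le_left _ _)
  have hR : w ≤ Rout.x2 - Rin.x2 := (min_le_right _ _).trans (min_le_right _ _)
  have hw0 : 0 ≤ w := by
    simp only [hw, annWidth, le_min_iff, annTopWidth, annBotWidth, annLeftWidth, annRightWidth]
    refine ⟨⟨by linarith, by linarith⟩, by linarith, by linarith⟩
  set d : ℝ × ℝ → ℝ := fun p =>
    min (min (p.1 - Rin.x1) (Rin.x2 - p.1)) (min (p.2 - Rin.y1) (Rin.y2 - p.2)) with hd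
  set Q := P.filter (fun p => Rect.Mem Rin p) with hQdef
  obtain ⟨p0, hp0, _⟩ := hin (α (0, 0))
  have hp0Q : p0 ∈ Q := Finset.mem_filter.mpr ⟨hp0.1, hp0.2⟩
  have hQne : Q.Nonempty := ⟨p0, hp0Q⟩
  set t := Q.inf' hQne d with ht
  have hmemQ : ∀ q ∈ Q, Rect.Mem Rin q := fun q hq => (Finset.mem_filter.mp hq).2
  have hdle : ∀ q ∈ Q, t ≤ q.1 - Rin.x1 ∧ t ≤ Rin.x2 - q.1 ∧
      t ≤ q.2 - Rin.y1 ∧ t ≤ Rin.y2 - q.2 := by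
    intro q hq
    have h : t ≤ d q := Finset.inf'_le d hq
    simp only [hd, le_min_iff] at h
    exact ⟨h.1.1, h.1.2, h.2.1, h.2.2⟩
  have ht0 : 0 ≤ t := by
    rw [ht]
    refine Finset.le_inf' hQne d ?_
    intro q hq
    obtain ⟨a, b, c, e⟩ := hmemQ q hq
    simp only [hd, le_min_iff]
    exact ⟨⟨by linarith, by linarith⟩, by linarith, by linarith⟩
  obtain ⟨hp01, hp02, hp03, hp04⟩ := hdle p0 hp0Q
  have hx12 : Rin.x1 + t ≤ Rin.x2 - t := by linarith
  have hy12 : Rin.y1 + t ≤ Rin.y2 - t := by linarith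
  set Rout'' : Rect := ⟨Rin.x1 - w, Rin.x2 + w, Rin.y1 - w, Rin.y2 + w,
    by linarith [Rin.hx], by linarith [Rin.hy]⟩ with hRout''
  set Rin'' : Rect := ⟨Rin.x1 + t, Rin.x2 - t, Rin.y1 + t, Rin.y2 - t, hx12, hy12⟩ with hRin''
  have hmem'' : ∀ q ∈ Q, Rect.Mem Rin'' q := by
    intro q hq
    obtain ⟨a, b, c, e⟩ := hdle q hq
    exact ⟨by simp [hRin'']; linarith, by simp [hRin'']; linarith,
      by simp [hRin'']; linarith, by simp [hRin'']; linarith⟩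
  have houtint : ∀ p : ℝ × ℝ, Rect.MemInt Rout'' p → Rect.MemInt Rout p := by
    intro p hp
    obtain ⟨a, b, c, e⟩ := hp
    simp only [hRout''] at a b c e
    exact ⟨by linarith, by linarith, by linarith, by linarith⟩
  obtain ⟨q0, hq0Q, hq0⟩ := Finset.exists_mem_eq_inf' hQne d
  have hq0P : q0 ∈ P := (Finset.mem_filter.mp hq0Q).1
  obtain ⟨g1, g2, g3, g4⟩ := hdle q0 hq0Q
  have hside : q0.1 - Rin.x1 = t ∨ Rin.x2 - q0.1 = t ∨
      q0.2 - Rin.y1 = t ∨ Rin.y2 - q0.2 = t := by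
    by_contra hc
    push_neg at hc
    obtain ⟨n1, n2, n3, n4⟩ := hc
    have h1 := lt_of_le_of_ne g1 (Ne.symm n1)
    have h2 := lt_of_le_of_ne g2 (Ne.symm n2)
    have h3 := lt_of_le_of_ne g3 (Ne.symm n3)
    have h4 := lt_of_le_of_ne g4 (Ne.symm n4)
    have : t < d q0 := by
      simp only [hd, lt_min_iff]
      exact ⟨⟨h1, h2⟩, h3, h4⟩
    have hq0' : t = d q0 := ht.trans hq0
    linarith [this, hq0'.ge]
  refine ⟨Rout'', Rin'', w + t, ⟨?_, ?_, ?_, ?_⟩, by linarith, ?_, ?_, ?_, ?_, ?_⟩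
  · exact ⟨by simp [hRout'', hRin'']; linarith, by simp [hRout'', hRin'']; linarith,
      by simp [hRout'', hRin'']; linarith, by simp [hRout'', hRin'']; linarith⟩
  · intro p hp hint
    have hmemRin : Rect.Mem Rin p := hemp p hp (houtint p hint)
    exact hmem'' p (Finset.mem_filter.mpr ⟨hp, hmemRin⟩)
  · intro i
    obtain ⟨p, ⟨hpP, hpin⟩, hpc⟩ := hin i
    exact ⟨p, ⟨hpP, hmem'' p (Finset.mem_filter.mpr ⟨hpP, hpin⟩)⟩, hpc⟩
  · intro i
    obtain ⟨p, ⟨hpP, hpout⟩, hpc⟩ := hout i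
    exact ⟨p, ⟨hpP, fun h => hpout (houtint p h)⟩, hpc⟩
  · simp [annTopWidth, hRout'', hRin'']; try ring
  · simp [annBotWidth, hRout'', hRin'']; try ring
  · simp [annLeftWidth, hRout'', hRin'']; try ring
  · simp [annRightWidth, hRout'', hRin'']; try ring
  · rcases hside with h | h | h | h
    · exact Or.inr (Or.inr (Or.inl ⟨q0, hq0P, by simp only [onLeftSide, hRin'']; exact ⟨by linarith, by linarith, by linarith⟩⟩))
    · exact Or.inr (Or.inr (Or.inr ⟨q0, hq0P, by simp only [onRightSide, hRin'']; exact ⟨by linarith, by linarith, by linarith⟩⟩))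
    · exact Or.inr (Or.inl ⟨q0, hq0P, by simp only [onBotSide, hRin'']; exact ⟨by linarith, by linarith, by linarith⟩⟩)
    · exact Or.inl ⟨q0, hq0P, by simp only [onTopSide, hRin'']; exact ⟨by linarith, by linarith, by linarith⟩⟩
end

section
/- Let [a,b] be a minimal rainbow interval. If a is not the maximum element of L, then a is the unique point of Q ∩ [a,b] whose color is α(a). Symmetrically, if b is not the minimum element of R, then b is the unique point of Q ∩ [a,b] whose color is α(b). -/
/-- The points of `Q` lying in the interval `[a, b]` contain at least one point of
each of the `k` colors. -/
def RainbowIcc (k : ℕ) (Q : Finset ℝ) (α : ℝ → Fin k) (a b : ℝ) : Prop :=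
  ∀ i : Fin k, ∃ q ∈ Q, a ≤ q ∧ q ≤ b ∧ α q = i

/-- `IsRofA k Q α t a b` says that `b = r(a)`: `b` is the smallest point of
`R = Q ∩ [t, ∞)` such that `Q ∩ [a, b]` is rainbow. -/
def IsRofA (k : ℕ) (Q : Finset ℝ) (α : ℝ → Fin k) (t a b : ℝ) : Prop :=
  b ∈ Q ∧ t ≤ b ∧ RainbowIcc k Q α a b ∧
  ∀ b' ∈ Q, t ≤ b' → RainbowIcc k Q α a b' → b ≤ b'

/-- `IsLofB k Q α s b a` says that `a = l(b)`: `a` is the largest point of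
`L = Q ∩ (-∞, s]` such that `Q ∩ [a, b]` is rainbow. -/
def IsLofB (k : ℕ) (Q : Finset ℝ) (α : ℝ → Fin k) (s b a : ℝ) : Prop :=
  a ∈ Q ∧ a ≤ s ∧ RainbowIcc k Q α a b ∧
  ∀ a' ∈ Q, a' ≤ s → RainbowIcc k Q α a' b → a' ≤ a

/-- `[a, b]`, with `a ∈ L = Q ∩ (-∞, s]` and `b ∈ R = Q ∩ [t, ∞)`, is a minimal
rainbow interval: `b = r(a)` and `a = l(b)`. -/
def IsMRI (k : ℕ) (Q : Finset ℝ) (α : ℝ → Fin k) (s t a b : ℝ) : Prop :=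
  a ∈ Q ∧ a ≤ s ∧ b ∈ Q ∧ t ≤ b ∧ IsRofA k Q α t a b ∧ IsLofB k Q α s b a

/-- Let `[a, b]` be a minimal rainbow interval. If `a` is not the maximum element of
`L`, then `a` is the unique point of `Q ∩ [a, b]` of color `α a`; symmetrically, if `b`
is not the minimum element of `R`, then `b` is the unique point of `Q ∩ [a, b]` of
color `α b`. -/
theorem MRI_endpoint_color_unique (k : ℕ) (Q : Finset ℝ) (α : ℝ → Fin k) (s t : ℝ)
    (hst : s < t) (a b : ℝ) (h : IsMRI k Q α s t a b) :
    ((∃ a' ∈ Q, a' ≤ s ∧ a < a') →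
      ∀ q ∈ Q, a ≤ q → q ≤ b → α q = α a → q = a) ∧
    ((∃ b' ∈ Q, t ≤ b' ∧ b' < b) →
      ∀ q ∈ Q, a ≤ q → q ≤ b → α q = α b → q = b) := by
  obtain ⟨haQ, has, hbQ, htb, ⟨_, _, _, hRmin⟩, ⟨_, _, hrain, hLmax⟩⟩ := h
  constructor
  · rintro ⟨a', ha'Q, ha's, haa'⟩ q hqQ haq hqb hcol
    by_contra hne
    have hq : a < q := lt_of_le_of_ne haq (Ne.symm hne)
    set T : Finset ℝ := Q.filter (fun x => a < x ∧ x ≤ s) with hT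
    have hTne : T.Nonempty := ⟨a', by simp [hT, ha'Q, haa', ha's]⟩
    set a₀ := T.min' hTne with ha₀
    have hmem := T.min'_mem hTne
    rw [Finset.mem_filter] at hmem
    obtain ⟨ha₀Q, haa₀, ha₀s⟩ := hmem
    have hle : ∀ x ∈ Q, a < x → x ≤ s → a₀ ≤ x := fun x hx h1 h2 =>
      T.min'_le x (by simp [hT, hx, h1, h2])
    have hrain' : RainbowIcc k Q α a₀ b := by
      intro i
      by_cases hi : α a = i
      · refine ⟨q, hqQ, ?_, hqb, hcol.trans hi⟩
        by_contra hlt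
        push_neg at hlt
        exact absurd (hle q hqQ hq (le_of_lt (lt_of_lt_of_le hlt ha₀s))) (not_le.mpr hlt)
      · obtain ⟨p, hpQ, hap, hpb, hpi⟩ := hrain i
        have hpa : a < p := lt_of_le_of_ne hap (by rintro rfl; exact hi hpi)
        refine ⟨p, hpQ, ?_, hpb, hpi⟩
        by_contra hlt
        push_neg at hlt
        exact absurd (hle p hpQ hpa (le_of_lt (lt_of_lt_of_le hlt ha₀s))) (not_le.mpr hlt)
    exact absurd (hLmax a₀ ha₀Q ha₀s hrain') (not_le.mpr haa₀)
  · rintro ⟨b', hb'Q, htb', hb'b⟩ q hqQ haq hqb hcol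
    by_contra hne
    have hq : q < b := lt_of_le_of_ne hqb hne
    set T : Finset ℝ := Q.filter (fun x => x < b ∧ t ≤ x) with hT
    have hTne : T.Nonempty := ⟨b', by simp [hT, hb'Q, hb'b, htb']⟩
    set b₀ := T.max' hTne with hb₀
    have hmem := T.max'_mem hTne
    rw [Finset.mem_filter] at hmem
    obtain ⟨hb₀Q, hb₀b, htb₀⟩ := hmem
    have hle : ∀ x ∈ Q, x < b → t ≤ x → x ≤ b₀ := fun x hx h1 h2 =>
      T.le_max' x (by simp [hT, hx, h1, h2])
    have hrain' : RainbowIcc k Q α a b₀ := by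
      intro i
      by_cases hi : α b = i
      · refine ⟨q, hqQ, haq, ?_, hcol.trans hi⟩
        by_contra hlt
        push_neg at hlt
        exact absurd (hle q hqQ hq (le_of_lt (lt_of_le_of_lt htb₀ hlt))) (not_le.mpr hlt)
      · obtain ⟨p, hpQ, hap, hpb, hpi⟩ := hrain i
        have hpa : p < b := lt_of_le_of_ne hpb (by rintro rfl; exact hi hpi)
        refine ⟨p, hpQ, hap, ?_, hpi⟩
        by_contra hlt
        push_neg at hlt
        exact absurd (hle p hpQ hpa (le_of_lt (lt_of_le_of_lt htb₀ hlt))) (not_le.mpr hlt)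
    exact absurd (hRmin b₀ hb₀Q htb₀ hrain') (not_le.mpr hb₀b)
end

section
/- The left endpoints of distinct minimal rainbow intervals have pairwise distinct colors, and the right endpoints of distinct minimal rainbow intervals have pairwise distinct colors. Consequently, the number of distinct minimal rainbow intervals is at most k. -/
lemma MRI_key (k : ℕ) (Q : Finset ℝ) (α : ℝ → Fin k) (s t : ℝ) (hst : s < t)
    {a1 b1 a2 b2 : ℝ} (h1 : IsMRI k Q α s t a1 b1) (h2 : IsMRI k Q α s t a2 b2)
    (hlt : a1 < a2) : α a1 ≠ α a2 ∧ α b1 ≠ α b2 := by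
  classical
  obtain ⟨ha1Q, ha1s, hb1Q, htb1, hR1, hL1⟩ := h1
  obtain ⟨ha2Q, ha2s, hb2Q, htb2, hR2, hL2⟩ := h2
  have ha2b1 : a2 ≤ b1 := le_trans ha2s (le_trans hst.le htb1)
  have hnotrb : ¬ RainbowIcc k Q α a2 b1 := by
    intro hrb
    exact absurd (hL1.2.2.2 a2 ha2Q ha2s hrb) (not_le.mpr hlt)
  set M : Finset (Fin k) :=
    Finset.univ.filter (fun i => ∀ q ∈ Q, a2 ≤ q → q ≤ b1 → α q ≠ i) with hMdef
  have hMmem : ∀ i : Fin k, i ∈ M ↔ ∀ q ∈ Q, a2 ≤ q → q ≤ b1 → α q ≠ i := by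
    intro i; simp [hMdef]
  have hMne : M.Nonempty := by
    by_contra hM
    apply hnotrb
    intro i
    have : i ∉ M := fun h => hM ⟨i, h⟩
    rw [hMmem] at this
    push_neg at this
    obtain ⟨q, hq, hq1, hq2, hq3⟩ := this
    exact ⟨q, hq, hq1, hq2, hq3⟩
  choose x hxQ hxa hxb hxc using hL1.2.2.1
  choose y hyQ hya hyb hyc using hR2.2.2.1
  have hxlt : ∀ j ∈ M, x j < a2 := by
    intro j hj
    by_contra h
    exact (hMmem j).1 hj (x j) (hxQ j) (not_lt.mp h) (hxb j) (hxc j)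
  have hylt : ∀ j ∈ M, b1 < y j := by
    intro j hj
    by_contra h
    exact (hMmem j).1 hj (y j) (hyQ j) (hya j) (not_lt.mp h) (hyc j)
  constructor
  · intro hcol
    obtain ⟨i, hiM, hmin⟩ := M.exists_min_image x hMne
    have hrb : RainbowIcc k Q α (x i) b1 := by
      intro j
      by_cases hj : j ∈ M
      · exact ⟨x j, hxQ j, hmin j hj, hxb j, hxc j⟩
      · rw [hMmem] at hj
        push_neg at hj
        obtain ⟨q, hq, hq1, hq2, hq3⟩ := hj
        exact ⟨q, hq, le_trans (hxlt i hiM).le hq1, hq2, hq3⟩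
    have hxs : x i ≤ s := le_trans (hxlt i hiM).le ha2s
    have hle : x i ≤ a1 := hL1.2.2.2 (x i) (hxQ i) hxs hrb
    have heq : x i = a1 := le_antisymm hle (hxa i)
    have : α a1 = i := heq ▸ hxc i
    exact (hMmem i).1 hiM a2 ha2Q le_rfl ha2b1 (hcol ▸ this)
  · intro hcol
    obtain ⟨i, hiM, hmax⟩ := M.exists_max_image y hMne
    have hrb : RainbowIcc k Q α a2 (y i) := by
      intro j
      by_cases hj : j ∈ M
      · exact ⟨y j, hyQ j, hya j, hmax j hj, hyc j⟩
      · rw [hMmem] at hj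
        push_neg at hj
        obtain ⟨q, hq, hq1, hq2, hq3⟩ := hj
        exact ⟨q, hq, hq1, le_trans hq2 (hylt i hiM).le, hq3⟩
    have hty : t ≤ y i := le_trans htb1 (hylt i hiM).le
    have hle : b2 ≤ y i := hR2.2.2.2 (y i) (hyQ i) hty hrb
    have heq : y i = b2 := le_antisymm (hyb i) hle
    have : α b2 = i := heq ▸ hyc i
    exact (hMmem i).1 hiM b1 hb1Q ha2b1 le_rfl (hcol.symm ▸ this)

lemma MRI_b_unique (k : ℕ) (Q : Finset ℝ) (α : ℝ → Fin k) (s t : ℝ)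
    {a b1 b2 : ℝ} (h1 : IsMRI k Q α s t a b1) (h2 : IsMRI k Q α s t a b2) :
    b1 = b2 := by
  obtain ⟨_, _, hb1Q, htb1, hR1, _⟩ := h1
  obtain ⟨_, _, hb2Q, htb2, hR2, _⟩ := h2
  exact le_antisymm (hR1.2.2.2 b2 hb2Q htb2 hR2.2.2.1)
    (hR2.2.2.2 b1 hb1Q htb1 hR1.2.2.1)

/-- Left endpoints of distinct minimal rainbow intervals have distinct colors, and so do
right endpoints; consequently there are at most `k` minimal rainbow intervals. -/
theorem MRI_count_le_k (k : ℕ) (Q : Finset ℝ) (α : ℝ → Fin k) (s t : ℝ) (hst : s < t) :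
    (∀ a1 b1 a2 b2, IsMRI k Q α s t a1 b1 → IsMRI k Q α s t a2 b2 →
      (a1, b1) ≠ (a2, b2) → α a1 ≠ α a2 ∧ α b1 ≠ α b2) ∧
    {g : ℝ × ℝ | IsMRI k Q α s t g.1 g.2}.Finite ∧
    {g : ℝ × ℝ | IsMRI k Q α s t g.1 g.2}.ncard ≤ k := by
  have main : ∀ a1 b1 a2 b2, IsMRI k Q α s t a1 b1 → IsMRI k Q α s t a2 b2 →
      (a1, b1) ≠ (a2, b2) → α a1 ≠ α a2 ∧ α b1 ≠ α b2 := by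
    intro a1 b1 a2 b2 h1 h2 hne
    have hane : a1 ≠ a2 := by
      intro heq
      subst heq
      exact hne (by rw [MRI_b_unique k Q α s t h1 h2])
    rcases hane.lt_or_gt with h | h
    · exact MRI_key k Q α s t hst h1 h2 h
    · obtain ⟨c1, c2⟩ := MRI_key k Q α s t hst h2 h1 h
      exact ⟨c1.symm, c2.symm⟩
  refine ⟨main, ?_, ?_⟩
  all_goals {
    have hinj : Set.InjOn (fun g : ℝ × ℝ => α g.1)
        {g : ℝ × ℝ | IsMRI k Q α s t g.1 g.2} := by
      intro g1 hg1 g2 hg2 heq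
      by_contra hne
      have : (g1.1, g1.2) ≠ (g2.1, g2.2) := by
        simp only [ne_eq, Prod.mk.injEq, not_and]
        intro h1 h2
        exact hne (Prod.ext h1 h2)
      exact (main g1.1 g1.2 g2.1 g2.2 hg1 hg2 this).1 heq
    have hfin : {g : ℝ × ℝ | IsMRI k Q α s t g.1 g.2}.Finite :=
      Set.Finite.of_finite_image (Set.toFinite _) hinj
    first
    | exact hfin
    | { rw [← Set.ncard_image_of_injOn hinj]
        calc ((fun g : ℝ × ℝ => α g.1) '' _).ncard
            ≤ (Set.univ : Set (Fin k)).ncard :=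
              Set.ncard_le_ncard (Set.subset_univ _) Set.finite_univ
          _ = k := by simp [Set.ncard_univ] }
  }
end

section
/- Fix a real w > 0 and call a pair of points of Q that are consecutive in the sorted order of Q and at distance at least w from each other a w-gap. For each minimal rainbow interval [a,b], consider the rightmost w-gap lying entirely to the left of a and the leftmost w-gap lying entirely to the right of b (whenever these exist). Then the set of all w-gaps obtained in this way, over all minimal rainbow intervals, has cardinality at most 2k. -/
/-- `(u, v)` is a `w`-gap of `Q`: `u` and `v` are consecutive points of `Q` in sorted
order, at distance at least `w` from each other. -/
def IsWGap (Q : Finset ℝ) (w u v : ℝ) : Prop :=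
  u ∈ Q ∧ v ∈ Q ∧ u < v ∧ w ≤ v - u ∧ ∀ q ∈ Q, ¬ (u < q ∧ q < v)

/-- If `[a,b]` is an MRI and `b` is not the minimum of `R`, then the color of `b`
appears in `Q ∩ [a,b]` only at `b`. -/
lemma mri_key_color {k : ℕ} {Q : Finset ℝ} {α : ℝ → Fin k} {s t a b : ℝ}
    (hmri : IsMRI k Q α s t a b) (hex : ∃ q ∈ Q, t ≤ q ∧ q < b) :
    ∀ q ∈ Q, a ≤ q → q < b → α q ≠ α b := by
  classical
  obtain ⟨haQ, has, hbQ, htb, hrof, hlof⟩ := hmri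
  set F := Q.filter (fun q => t ≤ q ∧ q < b) with hF
  have hFne : F.Nonempty := by
    obtain ⟨q, hq, h1, h2⟩ := hex
    exact ⟨q, Finset.mem_filter.2 ⟨hq, h1, h2⟩⟩
  set b'' := F.max' hFne with hb''
  have hmem : b'' ∈ Q ∧ t ≤ b'' ∧ b'' < b := Finset.mem_filter.1 (F.max'_mem hFne)
  have hle : ∀ q ∈ Q, t ≤ q → q < b → q ≤ b'' := fun q hq h1 h2 =>
    F.le_max' q (Finset.mem_filter.2 ⟨hq, h1, h2⟩)
  have hnr : ¬ RainbowIcc k Q α a b'' := by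
    intro hr
    exact absurd (hrof.2.2.2 b'' hmem.1 hmem.2.1 hr) (not_le.2 hmem.2.2)
  rw [RainbowIcc] at hnr
  push_neg at hnr
  obtain ⟨c, hc⟩ := hnr
  have hcol : α b = c := by
    obtain ⟨p, hpQ, hap, hpb, hpc⟩ := hrof.2.2.1 c
    rcases eq_or_lt_of_le hpb with rfl | hlt
    · exact hpc
    · exfalso
      rcases le_or_gt p b'' with h | h
      · exact hc p hpQ hap h hpc
      · exact absurd (hle p hpQ (hmem.2.1.trans h.le) hlt) (not_le.2 h)
  intro q hqQ haq hqb hq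
  rcases le_or_gt q b'' with h | h
  · exact hc q hqQ haq h (hq.trans hcol)
  · exact absurd (hle q hqQ (hmem.2.1.trans h.le) hqb) (not_le.2 h)

lemma mri_a_unique {k : ℕ} {Q : Finset ℝ} {α : ℝ → Fin k} {s t a a' b : ℝ}
    (h : IsMRI k Q α s t a b) (h' : IsMRI k Q α s t a' b) : a = a' :=
  le_antisymm (h'.2.2.2.2.2.2.2.2 a h.1 h.2.1 h.2.2.2.2.2.2.2.1)
    (h.2.2.2.2.2.2.2.2 a' h'.1 h'.2.1 h'.2.2.2.2.2.2.2.1)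

lemma card_B_le (k : ℕ) (Q : Finset ℝ) (α : ℝ → Fin k) (s t : ℝ) (hst : s < t) :
    {b : ℝ | ∃ a, IsMRI k Q α s t a b}.ncard ≤ k := by
  classical
  set B := {b : ℝ | ∃ a, IsMRI k Q α s t a b} with hB
  set A := {a : ℝ | ∃ b, IsMRI k Q α s t a b} with hA
  have hAQ : A ⊆ (Q : Set ℝ) := fun a ⟨b, h⟩ => h.1
  have hAfin : A.Finite := Q.finite_toSet.subset hAQ
  rcases B.eq_empty_or_nonempty with h | ⟨b0, a0, hb0⟩
  · simp [h]
  have hAne : hAfin.toFinset.Nonempty := by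
    rw [Set.Finite.toFinset_nonempty]; exact ⟨a0, b0, hb0⟩
  set amax := hAfin.toFinset.max' hAne with hamax
  have hamaxA : amax ∈ A := by
    have := hAfin.toFinset.max'_mem hAne
    rwa [Set.Finite.mem_toFinset] at this
  have hmaxle : ∀ a ∈ A, a ≤ amax := fun a ha =>
    hAfin.toFinset.le_max' a (hAfin.mem_toFinset.2 ha)
  set f : ℝ → Fin k := fun b => if ∃ q ∈ Q, t ≤ q ∧ q < b then α b else α amax with hf
  have hinj : Set.InjOn f B := by
    rintro b1 ⟨a1, h1⟩ b2 ⟨a2, h2⟩ hfe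
    by_cases c1 : ∃ q ∈ Q, t ≤ q ∧ q < b1 <;>
      by_cases c2 : ∃ q ∈ Q, t ≤ q ∧ q < b2 <;>
      simp only [hf, c1, c2, if_true, if_false] at hfe
    · rcases lt_trichotomy b1 b2 with hlt | heq | hlt
      · exact absurd hfe (mri_key_color h2 c2 b1 h1.2.2.1
          (h2.2.1.trans (hst.le.trans h1.2.2.2.1)) hlt)
      · exact heq
      · exact absurd hfe.symm (mri_key_color h1 c1 b2 h2.2.2.1
          (h1.2.1.trans (hst.le.trans h2.2.2.2.1)) hlt)
    · exfalso
      refine mri_key_color h1 c1 amax (hAQ hamaxA) (hmaxle a1 ⟨b1, h1⟩) ?_ hfe.symm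
      obtain ⟨bm, hbm⟩ := hamaxA
      exact lt_of_le_of_lt hbm.2.1 (hst.trans_le h1.2.2.2.1)
    · exfalso
      refine mri_key_color h2 c2 amax (hAQ hamaxA) (hmaxle a2 ⟨b2, h2⟩) ?_ hfe
      obtain ⟨bm, hbm⟩ := hamaxA
      exact lt_of_le_of_lt hbm.2.1 (hst.trans_le h2.2.2.2.1)
    · push_neg at c1 c2
      exact le_antisymm (c1 b2 h2.2.2.1 h2.2.2.2.1) (c2 b1 h1.2.2.1 h1.2.2.2.1)
  calc B.ncard ≤ (Set.univ : Set (Fin k)).ncard :=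
        Set.ncard_le_ncard_of_injOn f (fun _ _ => trivial) hinj Set.finite_univ
    _ = k := by simp [Set.ncard_univ]

/-- If every element of `S` is related to an element of `T`, and each element of `T`
determines at most one element of `S`, then `S` has at most as many elements as `T`. -/
lemma ncard_le_rel {γ β : Type*} {S : Set γ} {T : Set β} (hT : T.Finite) (R : γ → β → Prop)
    (h1 : ∀ g ∈ S, ∃ b ∈ T, R g b)
    (h2 : ∀ b, ∀ g ∈ S, ∀ g' ∈ S, R g b → R g' b → g = g') :
    S.ncard ≤ T.ncard := by
  classical
  rcases S.eq_empty_or_nonempty with rfl | ⟨g0, hg0⟩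
  · simp
  obtain ⟨b0, hb0, -⟩ := h1 g0 hg0
  set f : γ → β := fun g => if h : ∃ b, b ∈ T ∧ R g b then h.choose else b0 with hf
  have hfm : ∀ g ∈ S, f g ∈ T ∧ R g (f g) := by
    intro g hg
    obtain ⟨b, hb, hR⟩ := h1 g hg
    have h : ∃ b, b ∈ T ∧ R g b := ⟨b, hb, hR⟩
    simp only [hf, dif_pos h]
    exact ⟨h.choose_spec.1, h.choose_spec.2⟩
  refine Set.ncard_le_ncard_of_injOn f (fun g hg => (hfm g hg).1) ?_ hT
  intro g hg g' hg' he
  refine h2 (f g) g hg g' hg' (hfm g hg).2 ?_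
  rw [he]; exact (hfm g' hg').2

lemma gap_snd_unique {Q : Finset ℝ} {w u v v' : ℝ}
    (h : IsWGap Q w u v) (h' : IsWGap Q w u v') : v = v' := by
  rcases lt_trichotomy v v' with hlt | heq | hlt
  · exact absurd ⟨h.2.2.1, hlt⟩ (h'.2.2.2.2 v h.2.1)
  · exact heq
  · exact absurd ⟨h'.2.2.1, hlt⟩ (h.2.2.2.2 v' h'.2.1)


/-- The set of relevant `w`-gaps — for each minimal rainbow interval `[a, b]`, the
rightmost `w`-gap lying entirely to the left of `a` and the leftmost `w`-gap lying
entirely to the right of `b` (whenever they exist) — has at most `2 * k` elements. -/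
theorem relevant_wgaps_le (k : ℕ) (Q : Finset ℝ) (α : ℝ → Fin k) (s t : ℝ) (hst : s < t)
    (w : ℝ) (hw : 0 < w) :
    {g : ℝ × ℝ | ∃ a b, IsMRI k Q α s t a b ∧
      ((IsWGap Q w g.1 g.2 ∧ g.2 ≤ a ∧ ∀ u v, IsWGap Q w u v → v ≤ a → u ≤ g.1) ∨
       (IsWGap Q w g.1 g.2 ∧ b ≤ g.1 ∧ ∀ u v, IsWGap Q w u v → b ≤ u → g.1 ≤ u))}.Finite ∧
    {g : ℝ × ℝ | ∃ a b, IsMRI k Q α s t a b ∧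
      ((IsWGap Q w g.1 g.2 ∧ g.2 ≤ a ∧ ∀ u v, IsWGap Q w u v → v ≤ a → u ≤ g.1) ∨
       (IsWGap Q w g.1 g.2 ∧ b ≤ g.1 ∧ ∀ u v, IsWGap Q w u v → b ≤ u → g.1 ≤ u))}.ncard
      ≤ 2 * k := by
  classical
  set A := {a : ℝ | ∃ b, IsMRI k Q α s t a b} with hA
  set B := {b : ℝ | ∃ a, IsMRI k Q α s t a b} with hB
  have hAfin : A.Finite := Q.finite_toSet.subset (fun a ⟨b, h⟩ => h.1)
  have hBfin : B.Finite := Q.finite_toSet.subset (fun b ⟨a, h⟩ => h.2.2.1)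
  set SL : Set (ℝ × ℝ) := {g | ∃ a ∈ A,
    IsWGap Q w g.1 g.2 ∧ g.2 ≤ a ∧ ∀ u v, IsWGap Q w u v → v ≤ a → u ≤ g.1} with hSL
  set SR : Set (ℝ × ℝ) := {g | ∃ b ∈ B,
    IsWGap Q w g.1 g.2 ∧ b ≤ g.1 ∧ ∀ u v, IsWGap Q w u v → b ≤ u → g.1 ≤ u} with hSR
  have hSLfin : SL.Finite := ((Q ×ˢ Q).finite_toSet).subset (by
    rintro ⟨u, v⟩ ⟨a, ha, hg, -⟩
    exact Finset.mem_coe.2 (Finset.mem_product.2 ⟨hg.1, hg.2.1⟩))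
  have hSRfin : SR.Finite := ((Q ×ˢ Q).finite_toSet).subset (by
    rintro ⟨u, v⟩ ⟨b, hb, hg, -⟩
    exact Finset.mem_coe.2 (Finset.mem_product.2 ⟨hg.1, hg.2.1⟩))
  have hsub : {g : ℝ × ℝ | ∃ a b, IsMRI k Q α s t a b ∧
      ((IsWGap Q w g.1 g.2 ∧ g.2 ≤ a ∧ ∀ u v, IsWGap Q w u v → v ≤ a → u ≤ g.1) ∨
       (IsWGap Q w g.1 g.2 ∧ b ≤ g.1 ∧ ∀ u v, IsWGap Q w u v → b ≤ u → g.1 ≤ u))}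
      ⊆ SL ∪ SR := by
    rintro g ⟨a, b, hm, hc | hc⟩
    · exact Or.inl ⟨a, ⟨b, hm⟩, hc⟩
    · exact Or.inr ⟨b, ⟨a, hm⟩, hc⟩
  have hLcard : SL.ncard ≤ A.ncard := by
    refine ncard_le_rel hAfin
      (fun g a => IsWGap Q w g.1 g.2 ∧ g.2 ≤ a ∧ ∀ u v, IsWGap Q w u v → v ≤ a → u ≤ g.1)
      (fun g hg => hg) ?_
    rintro a g - g' - ⟨hg, hga, hgm⟩ ⟨hg', hga', hgm'⟩
    have h1 : g.1 = g'.1 := le_antisymm (hgm' g.1 g.2 hg hga) (hgm g'.1 g'.2 hg' hga')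
    have h2 : g.2 = g'.2 := gap_snd_unique hg (h1 ▸ hg')
    exact Prod.ext h1 h2
  have hRcard : SR.ncard ≤ B.ncard := by
    refine ncard_le_rel hBfin
      (fun g b => IsWGap Q w g.1 g.2 ∧ b ≤ g.1 ∧ ∀ u v, IsWGap Q w u v → b ≤ u → g.1 ≤ u)
      (fun g hg => hg) ?_
    rintro b g - g' - ⟨hg, hgb, hgm⟩ ⟨hg', hgb', hgm'⟩
    have h1 : g.1 = g'.1 := le_antisymm (hgm g'.1 g'.2 hg' hgb') (hgm' g.1 g.2 hg hgb)
    have h2 : g.2 = g'.2 := gap_snd_unique hg (h1 ▸ hg')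
    exact Prod.ext h1 h2
  have hBk : B.ncard ≤ k := card_B_le k Q α s t hst
  have hAk : A.ncard ≤ k := by
    refine le_trans (ncard_le_rel hBfin (fun a b => IsMRI k Q α s t a b) ?_ ?_) hBk
    · rintro a ⟨b, hb⟩; exact ⟨b, ⟨a, hb⟩, hb⟩
    · rintro b a - a' - h h'; exact mri_a_unique h h'
  have hfin : ({g : ℝ × ℝ | ∃ a b, IsMRI k Q α s t a b ∧
      ((IsWGap Q w g.1 g.2 ∧ g.2 ≤ a ∧ ∀ u v, IsWGap Q w u v → v ≤ a → u ≤ g.1) ∨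
       (IsWGap Q w g.1 g.2 ∧ b ≤ g.1 ∧ ∀ u v, IsWGap Q w u v → b ≤ u → g.1 ≤ u))}).Finite :=
    (hSLfin.union hSRfin).subset hsub
  refine ⟨hfin, ?_⟩
  calc _ ≤ (SL ∪ SR).ncard := Set.ncard_le_ncard hsub (hSLfin.union hSRfin)
    _ ≤ SL.ncard + SR.ncard := Set.ncard_union_le _ _
    _ ≤ A.ncard + B.ncard := add_le_add hLcard hRcard
    _ ≤ k + k := add_le_add hAk hBk
    _ = 2 * k := (two_mul k).symm
end
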